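/- Assume V⁺ admits a monomial parametrization with exponent matrix A (data p, A, K, ψ) and that the cone generator matrix E has no zero row. Let F be any predicate on ℝ^{n−s} (for instance a logical combination of polynomial inequalities in the total concentrations). Then there exist k ∈ K and c ∈ im₊(Z) such that F(c) holds and the equation Z(ψ(k)⋆ξ^A) = c has at least two distinct solutions ξ₁ ≠ ξ₂ ∈ ℝ_{>0}^{n−p}, if and only if there exist a ∈ ℝ_{>0}^n and ξ ∈ ℝ_{>0}^{n−p} with ξ ≠ 𝟙 such that Z(a⋆ξ^A − a) = 0 and F(Za) holds. -/

import Mathlib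

open Matrix

noncomputable section

/-- The monomial map φ: `phi Y x j = ∏ i, x i ^ Y i j`. -/
def phi {n r : ℕ} (Y : Matrix (Fin n) (Fin r) ℕ) (x : Fin n → ℝ) : Fin r → ℝ :=
  fun j => ∏ i, x i ^ Y i j

/-- The positive steady state variety V⁺. -/
def Vplus {n r : ℕ} (Y : Matrix (Fin n) (Fin r) ℕ) (S : Matrix (Fin n) (Fin r) ℝ) :
    Set ((Fin r → ℝ) × (Fin n → ℝ)) :=
  {p | (∀ j, 0 < p.1 j) ∧ (∀ i, 0 < p.2 i) ∧
    S.mulVec (fun j => p.1 j * phi Y p.2 j) = 0}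

/-- `E` is a cone generator matrix for `S`:
`E` is nonnegative and `ker S ∩ ℝ_{≥0}^r = {Eλ : λ ≥ 0}`. -/
def IsConeGenMatrix {n r d : ℕ} (S : Matrix (Fin n) (Fin r) ℝ)
    (E : Matrix (Fin r) (Fin d) ℝ) : Prop :=
  (∀ j l, 0 ≤ E j l) ∧
  {v : Fin r → ℝ | S.mulVec v = 0 ∧ ∀ j, 0 ≤ v j} =
    {v : Fin r → ℝ | ∃ lam : Fin d → ℝ, (∀ l, 0 ≤ lam l) ∧ v = E.mulVec lam}

/-- The coefficient cone Λ(E). -/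
def Lambda {r d : ℕ} (E : Matrix (Fin r) (Fin d) ℝ) : Set (Fin d → ℝ) :=
  {lam | (∀ l, 0 ≤ lam l) ∧ ∀ j, 0 < E.mulVec lam j}

/-- `ξ^B`: for a rational `q × m` matrix `B`, `(ξ^B) j = ∏ i, ξ i ^ (B i j)` (real powers). -/
def vecPow {q m : ℕ} (ξ : Fin q → ℝ) (B : Matrix (Fin q) (Fin m) ℚ) : Fin m → ℝ :=
  fun j => ∏ i, ξ i ^ ((B i j : ℝ))

/-- V⁺ admits a monomial parametrization with exponent matrix `A` (data `p`, `A`, `K`, `ψ`). -/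
def IsMonomialParamExp {n r : ℕ} (Y : Matrix (Fin n) (Fin r) ℕ)
    (S : Matrix (Fin n) (Fin r) ℝ) (p : ℕ) (A : Matrix (Fin (n - p)) (Fin n) ℚ)
    (K : Set (Fin r → ℝ)) (ψ : (Fin r → ℝ) → (Fin n → ℝ)) : Prop :=
  p < n ∧ A.rank = n - p ∧ (∀ k ∈ K, ∀ j, 0 < k j) ∧ (∀ k ∈ K, ∀ i, 0 < ψ k i) ∧
  ∀ k x, (∀ j : Fin r, 0 < k j) → (∀ i : Fin n, 0 < x i) →
    ((k, x) ∈ Vplus Y S ↔ k ∈ K ∧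
      ∃ ξ : Fin (n - p) → ℝ, (∀ l, 0 < ξ l) ∧ x = fun i => ψ k i * vecPow ξ A i)

/-- `Z` is a conservation matrix for `S` (with `s = rank S`):
its rows form a basis of the left kernel of `S`. -/
def IsConservationMatrix {n r : ℕ} (S : Matrix (Fin n) (Fin r) ℝ) (s : ℕ)
    (Z : Matrix (Fin (n - s)) (Fin n) ℝ) : Prop :=
  S.rank = s ∧ s < n ∧ LinearIndependent ℝ (fun i => Z i) ∧
    Submodule.span ℝ (Set.range (fun i => Z i)) = LinearMap.ker S.vecMulLinear

/-- `im₊(Z) = {Zx : x ≥ 0}`. -/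
def imPos {m n : ℕ} (Z : Matrix (Fin m) (Fin n) ℝ) : Set (Fin m → ℝ) :=
  {c | ∃ x : Fin n → ℝ, (∀ i, 0 ≤ x i) ∧ c = Z.mulVec x}

/-- The real row space of a rational matrix. -/
def rowSpace {q m : ℕ} (A : Matrix (Fin q) (Fin m) ℚ) : Submodule ℝ (Fin m → ℝ) :=
  Submodule.span ℝ (Set.range (fun l => fun i => ((A l i : ℝ))))

/-- The column space (image) of `S`. -/
def colSpace {n r : ℕ} (S : Matrix (Fin n) (Fin r) ℝ) : Submodule ℝ (Fin n → ℝ) :=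
  LinearMap.range S.mulVecLin

/-- Componentwise sign of a vector. -/
def signVec {m : ℕ} (v : Fin m → ℝ) : Fin m → ℝ := fun i => Real.sign (v i)

/-!
Write a positive concentration vector as `a = ψ(k) ⋆ ξ₀^A`. Since `ξ ↦ ξ^A` is multiplicative on
positive vectors, two positive solutions `ξ₁ ≠ ξ₂` of `Z(ψ(k) ⋆ ξ^A) = c` correspond to the single
positive solution `ξ₁ / ξ₂ ≠ 𝟙` of `Z(a ⋆ ξ^A − a) = 0` with `a = ψ(k) ⋆ ξ₂^A`, and `c = Za`.
Conversely every positive `a` is of that form: `E𝟙` is a positive vector in `ker S`, so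
`k = E𝟙 / φ(a)` puts `(k, a)` on `V⁺`, and the parametrization supplies `k ∈ K` and `ξ₀`.
-/

section VecPow

variable {q m : ℕ}

lemma vecPow_pos {ξ : Fin q → ℝ} (hξ : ∀ l, 0 < ξ l) (B : Matrix (Fin q) (Fin m) ℚ)
    (j : Fin m) : 0 < vecPow ξ B j :=
  Finset.prod_pos fun i _ => Real.rpow_pos_of_pos (hξ i) _

lemma vecPow_mul {ξ η : Fin q → ℝ} (hξ : ∀ l, 0 ≤ ξ l) (hη : ∀ l, 0 ≤ η l)
    (B : Matrix (Fin q) (Fin m) ℚ) : vecPow (ξ * η) B = vecPow ξ B * vecPow η B := by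
  funext j
  simp only [vecPow, Pi.mul_apply, ← Finset.prod_mul_distrib]
  exact Finset.prod_congr rfl fun i _ => Real.mul_rpow (hξ i) (hη i)

lemma mulVec_mul_vecPow_mul_sub {n : ℕ} (Z : Matrix (Fin m) (Fin n) ℝ) (b : Fin n → ℝ)
    {ξ η : Fin q → ℝ} (hξ : ∀ l, 0 < ξ l) (hη : ∀ l, 0 < η l) (A : Matrix (Fin q) (Fin n) ℚ) :
    Z *ᵥ (b * vecPow η A * vecPow ξ A - b * vecPow η A) =
      Z *ᵥ (b * vecPow (η * ξ) A) - Z *ᵥ (b * vecPow η A) := by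
  rw [vecPow_mul (fun l => (hη l).le) (fun l => (hξ l).le), mulVec_sub, mul_assoc]

end VecPow

lemma phi_pos {n r : ℕ} (Y : Matrix (Fin n) (Fin r) ℕ) {x : Fin n → ℝ}
    (hx : ∀ i, 0 < x i) (j : Fin r) : 0 < phi Y x j :=
  Finset.prod_pos fun i _ => pow_pos (hx i) _

lemma IsConeGenMatrix.exists_pos_mem_ker {n r d : ℕ} {S : Matrix (Fin n) (Fin r) ℝ}
    {E : Matrix (Fin r) (Fin d) ℝ} (hE : IsConeGenMatrix S E) (hrow : ∀ j, ∃ l, E j l ≠ 0) :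
    ∃ v : Fin r → ℝ, S *ᵥ v = 0 ∧ ∀ j, 0 < v j := by
  have hmem : E *ᵥ 1 ∈ {v : Fin r → ℝ | S *ᵥ v = 0 ∧ ∀ j, 0 ≤ v j} :=
    hE.2 ▸ ⟨1, fun _ => zero_le_one, rfl⟩
  refine ⟨E *ᵥ 1, hmem.1, fun j => ?_⟩
  obtain ⟨l, hl⟩ := hrow j
  simp only [mulVec, dotProduct, Pi.one_apply, mul_one]
  exact Finset.sum_pos' (fun i _ => hE.1 j i) ⟨l, Finset.mem_univ l, (hE.1 j l).lt_of_ne' hl⟩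

lemma exists_mem_Vplus_of_pos {n r : ℕ} (Y : Matrix (Fin n) (Fin r) ℕ)
    {S : Matrix (Fin n) (Fin r) ℝ} {v : Fin r → ℝ} (hSv : S *ᵥ v = 0) (hv : ∀ j, 0 < v j)
    {x : Fin n → ℝ} (hx : ∀ i, 0 < x i) : ∃ k, (k, x) ∈ Vplus Y S := by
  refine ⟨v / phi Y x, fun j => div_pos (hv j) (phi_pos Y hx j), hx, ?_⟩
  have hkφ : (fun j => (v / phi Y x) j * phi Y x j) = v :=
    funext fun j => div_mul_cancel₀ _ (phi_pos Y hx j).ne'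
  rw [hkφ, hSv]

lemma IsMonomialParamExp.exists_eq_of_pos {n r p : ℕ} {Y : Matrix (Fin n) (Fin r) ℕ}
    {S : Matrix (Fin n) (Fin r) ℝ} {A : Matrix (Fin (n - p)) (Fin n) ℚ} {K : Set (Fin r → ℝ)}
    {ψ : (Fin r → ℝ) → (Fin n → ℝ)} (hparam : IsMonomialParamExp Y S p A K ψ)
    {v : Fin r → ℝ} (hSv : S *ᵥ v = 0) (hv : ∀ j, 0 < v j) {x : Fin n → ℝ}
    (hx : ∀ i, 0 < x i) :
    ∃ k ∈ K, ∃ ξ : Fin (n - p) → ℝ, (∀ l, 0 < ξ l) ∧ x = ψ k * vecPow ξ A := by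
  obtain ⟨k, hkx⟩ := exists_mem_Vplus_of_pos Y hSv hv hx
  obtain ⟨hk, ξ, hξ, rfl⟩ := (hparam.2.2.2.2 k x hkx.1 hx).mp hkx
  exact ⟨k, hk, ξ, hξ, rfl⟩

theorem multistationarity_with_constraints_general {n r d s p : ℕ}
    (Y : Matrix (Fin n) (Fin r) ℕ) (S : Matrix (Fin n) (Fin r) ℝ)
    (A : Matrix (Fin (n - p)) (Fin n) ℚ) (K : Set (Fin r → ℝ))
    (ψ : (Fin r → ℝ) → (Fin n → ℝ)) (hparam : IsMonomialParamExp Y S p A K ψ)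
    (E : Matrix (Fin r) (Fin d) ℝ) (hE : IsConeGenMatrix S E)
    (hrow : ∀ j, ∃ l, E j l ≠ 0)
    (Z : Matrix (Fin (n - s)) (Fin n) ℝ)
    (F : (Fin (n - s) → ℝ) → Prop) :
    (∃ k ∈ K, ∃ c ∈ imPos Z, F c ∧
        ∃ ξ₁ ξ₂ : Fin (n - p) → ℝ, (∀ l, 0 < ξ₁ l) ∧ (∀ l, 0 < ξ₂ l) ∧ ξ₁ ≠ ξ₂ ∧
          Z.mulVec (fun i => ψ k i * vecPow ξ₁ A i) = c ∧
          Z.mulVec (fun i => ψ k i * vecPow ξ₂ A i) = c) ↔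
      (∃ a : Fin n → ℝ, (∀ i, 0 < a i) ∧ ∃ ξ : Fin (n - p) → ℝ, (∀ l, 0 < ξ l) ∧
        ξ ≠ (fun _ => 1) ∧ Z.mulVec (fun i => a i * vecPow ξ A i - a i) = 0 ∧
        F (Z.mulVec a)) := by
  constructor
  · rintro ⟨k, hk, c, -, hF, ξ₁, ξ₂, hξ₁, hξ₂, hne, hZ₁, hZ₂⟩
    have hdiv : ∀ l, 0 < (ξ₁ / ξ₂) l := fun l => div_pos (hξ₁ l) (hξ₂ l)
    have hcancel : ξ₂ * (ξ₁ / ξ₂) = ξ₁ := funext fun l => mul_div_cancel₀ _ (hξ₂ l).ne'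
    refine ⟨ψ k * vecPow ξ₂ A, fun i => mul_pos (hparam.2.2.2.1 k hk i) (vecPow_pos hξ₂ A i),
      ξ₁ / ξ₂, hdiv, fun h => hne (funext fun l => ?_), ?_, hZ₂ ▸ hF⟩
    · exact (div_eq_one_iff_eq (hξ₂ l).ne').mp (congrFun h l)
    · change Z *ᵥ (ψ k * vecPow ξ₂ A * vecPow (ξ₁ / ξ₂) A - ψ k * vecPow ξ₂ A) = 0
      rw [mulVec_mul_vecPow_mul_sub Z _ hdiv hξ₂, hcancel]
      exact sub_eq_zero.mpr (hZ₁.trans hZ₂.symm)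
  · rintro ⟨a, ha, ξ, hξ, hξne, hZ0, hF⟩
    obtain ⟨v, hSv, hv⟩ := hE.exists_pos_mem_ker hrow
    obtain ⟨k, hk, ξ₀, hξ₀, rfl⟩ := hparam.exists_eq_of_pos hSv hv ha
    refine ⟨k, hk, _, ⟨_, fun i => (ha i).le, rfl⟩, hF, ξ₀, ξ₀ * ξ, hξ₀,
      fun l => mul_pos (hξ₀ l) (hξ l), fun h => hξne (funext fun l => ?_), rfl, ?_⟩
    · exact (mul_eq_left₀ (hξ₀ l).ne').mp (congrFun h l).symm
    · change Z *ᵥ (ψ k * vecPow ξ₀ A * vecPow ξ A - ψ k * vecPow ξ₀ A) = 0 at hZ0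
      rw [mulVec_mul_vecPow_mul_sub Z _ hξ hξ₀] at hZ0
      exact sub_eq_zero.mp hZ0

/-- semi-algebraic conditions F on the total concentrations can be added
to the rate-constant-free multistationarity criterion. -/
theorem multistationarity_with_constraints {n r d s p : ℕ} (hn : 1 ≤ n) (hr : 1 ≤ r)
    (Y : Matrix (Fin n) (Fin r) ℕ) (S : Matrix (Fin n) (Fin r) ℝ)
    (A : Matrix (Fin (n - p)) (Fin n) ℚ) (K : Set (Fin r → ℝ))
    (ψ : (Fin r → ℝ) → (Fin n → ℝ)) (hparam : IsMonomialParamExp Y S p A K ψ)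
    (E : Matrix (Fin r) (Fin d) ℝ) (hE : IsConeGenMatrix S E)
    (hrow : ∀ j, ∃ l, E j l ≠ 0)
    (Z : Matrix (Fin (n - s)) (Fin n) ℝ) (hZ : IsConservationMatrix S s Z)
    (F : (Fin (n - s) → ℝ) → Prop) :
    (∃ k ∈ K, ∃ c ∈ imPos Z, F c ∧
        ∃ ξ₁ ξ₂ : Fin (n - p) → ℝ, (∀ l, 0 < ξ₁ l) ∧ (∀ l, 0 < ξ₂ l) ∧ ξ₁ ≠ ξ₂ ∧
          Z.mulVec (fun i => ψ k i * vecPow ξ₁ A i) = c ∧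
          Z.mulVec (fun i => ψ k i * vecPow ξ₂ A i) = c) ↔
      (∃ a : Fin n → ℝ, (∀ i, 0 < a i) ∧ ∃ ξ : Fin (n - p) → ℝ, (∀ l, 0 < ξ l) ∧
        ξ ≠ (fun _ => 1) ∧ Z.mulVec (fun i => a i * vecPow ξ A i - a i) = 0 ∧
        F (Z.mulVec a)) :=
  multistationarity_with_constraints_general Y S A K ψ hparam E hE hrow Z F
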